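/- For k ∈ {0,...,d−1}, r ∈ {1,...,d−1}, ℓ = k+r mod d, and fixed bits a_k, a_ℓ, the sum (d/2^d) Σ_a |μ_a⟩⟨μ_a| over the 2^{d−2} strings a ∈ {0,1}^d with those two bits fixed equals (1/4)𝟙 + (1/4)(−1)^{a_k + a_ℓ}(|k⟩⟨ℓ| + |ℓ⟩⟨k|). -/

import Mathlib

/-!
Up to the factor `1/d`, the `(i, j)` entry of `|μ_a⟩⟨μ_a|` is the sign product
`(-1)^(a_i + a_j)`. Over the `2^(d-2)` strings with `a_k`, `a_ℓ` fixed this product is constant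
on the diagonal and at `(k, ℓ)`, `(ℓ, k)`. Any other off-diagonal entry involves a free bit `a_m`,
and flipping it is a sign-reversing involution of the summation set, so that entry sums to `0`.
-/

/-- `|μ_a⟩ = (1/√d) Σ_t (−1)^{a_t} |t⟩`. -/
noncomputable def muVec (d : ℕ) (a : Fin d → Bool) : Fin d → ℂ :=
  fun t => (((1 / Real.sqrt d) * (if a t then -1 else 1) : ℝ) : ℂ)

open Finset

section SignSums

variable {ι R : Type*} [DecidableEq ι] [CommRing R]

def boolSign (b : Bool) : R := if b then -1 else 1

@[simp] lemma boolSign_not (b : Bool) : (boolSign (!b) : R) = -boolSign b := by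
  cases b <;> simp [boolSign]

@[simp] lemma boolSign_mul_self (b : Bool) : (boolSign b : R) * boolSign b = 1 := by
  cases b <;> simp [boolSign]

lemma boolSign_xor (b c : Bool) : (boolSign (xor b c) : R) = boolSign b * boolSign c := by
  cases b <;> cases c <;> simp [boolSign]

def flipAt (m : ι) (a : ι → Bool) : ι → Bool := Function.update a m (!a m)

@[simp] lemma flipAt_self (m : ι) (a : ι → Bool) : flipAt m a m = !a m := by
  simp [flipAt]

lemma flipAt_of_ne {m j : ι} (h : j ≠ m) (a : ι → Bool) : flipAt m a j = a j :=
  Function.update_of_ne h _ _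

@[simp] lemma flipAt_flipAt (m : ι) (a : ι → Bool) : flipAt m (flipAt m a) = a := by
  simp [flipAt]

lemma flipAt_ne (m : ι) (a : ι → Bool) : flipAt m a ≠ a :=
  fun h => by simpa using congrFun h m

lemma sum_eq_zero_of_flipAt {M : Type*} [AddCommMonoid M] {S : Finset (ι → Bool)} (m : ι)
    (hS : ∀ a ∈ S, flipAt m a ∈ S) {g : (ι → Bool) → M}
    (hg : ∀ a ∈ S, g a + g (flipAt m a) = 0) : ∑ a ∈ S, g a = 0 :=
  sum_involution (fun a _ => flipAt m a) hg (fun a _ _ => flipAt_ne m a) hS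
    (fun a _ => flipAt_flipAt m a)

variable [Fintype ι]

lemma card_filter_forall_mem_eq (s : Finset ι) (b : ι → Bool) :
    #(univ.filter fun a : ι → Bool => ∀ i ∈ s, a i = b i) = 2 ^ (Fintype.card ι - #s) := by
  have hpi : univ.filter (fun a : ι → Bool => ∀ i ∈ s, a i = b i) =
      Fintype.piFinset fun i => if i ∈ s then {b i} else univ := by
    ext a
    simp only [mem_filter, mem_univ, true_and, Fintype.mem_piFinset]
    refine forall_congr' fun i => ?_
    split_ifs <;> simp [*]
  rw [hpi]
  calc #(Fintype.piFinset fun i => if i ∈ s then {b i} else univ)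
      = ∏ i, if i ∈ sᶜ then 2 else 1 := by
        rw [Fintype.card_piFinset]
        refine Fintype.prod_congr _ _ fun i => ?_
        by_cases hi : i ∈ s <;> simp [hi]
    _ = 2 ^ (Fintype.card ι - #s) := by
        rw [Fintype.prod_ite_mem, prod_const, card_compl]

def pinnedStrings (k l : ι) (bk bl : Bool) : Finset (ι → Bool) :=
  univ.filter fun a => a k = bk ∧ a l = bl

variable {k l : ι} {bk bl : Bool}

@[simp] lemma mem_pinnedStrings {a : ι → Bool} :
    a ∈ pinnedStrings k l bk bl ↔ a k = bk ∧ a l = bl := by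
  simp [pinnedStrings]

lemma card_pinnedStrings (hkl : k ≠ l) :
    4 * #(pinnedStrings k l bk bl) = 2 ^ Fintype.card ι := by
  have hpair : pinnedStrings k l bk bl =
      univ.filter (fun a : ι → Bool =>
        ∀ i ∈ ({k, l} : Finset ι), a i = if i = k then bk else bl) := by
    ext a; simp [hkl.symm]
  have htwo : 2 ≤ Fintype.card ι := by
    simpa [card_pair hkl] using card_le_univ {k, l}
  rw [hpair, card_filter_forall_mem_eq, card_pair hkl, show 4 = 2 ^ 2 by rfl, ← pow_add]
  congr 1
  omega

lemma flipAt_mem_pinnedStrings {m : ι} (hmk : m ≠ k) (hml : m ≠ l) {a : ι → Bool}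
    (ha : a ∈ pinnedStrings k l bk bl) : flipAt m a ∈ pinnedStrings k l bk bl := by
  simpa only [mem_pinnedStrings, flipAt_of_ne hmk.symm, flipAt_of_ne hml.symm] using ha

lemma sum_pinnedStrings_boolSign_mul_self (i : ι) :
    ∑ a ∈ pinnedStrings k l bk bl, (boolSign (a i) * boolSign (a i) : R) =
      #(pinnedStrings k l bk bl) := by
  simp

lemma sum_pinnedStrings_boolSign_mul_boolSign :
    ∑ a ∈ pinnedStrings k l bk bl, (boolSign (a k) * boolSign (a l) : R) =
      #(pinnedStrings k l bk bl) * (boolSign bk * boolSign bl) := by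
  rw [sum_congr rfl fun a ha => by rw [(mem_pinnedStrings.mp ha).1, (mem_pinnedStrings.mp ha).2],
    sum_const, nsmul_eq_mul]

lemma sum_pinnedStrings_boolSign_mul_eq_zero {i j : ι} (hij : i ≠ j)
    (hpair : ¬((i = k ∧ j = l) ∨ (i = l ∧ j = k))) :
    ∑ a ∈ pinnedStrings k l bk bl, (boolSign (a i) * boolSign (a j) : R) = 0 := by
  obtain ⟨m, hm, hmk, hml⟩ : ∃ m, (m = i ∨ m = j) ∧ m ≠ k ∧ m ≠ l := by
    by_contra! h
    have hi := h i (.inl rfl)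
    have hj := h j (.inr rfl)
    grind
  refine sum_eq_zero_of_flipAt m (fun a ha => flipAt_mem_pinnedStrings hmk hml ha) fun a _ => ?_
  rcases hm with rfl | rfl
  · simp [flipAt_of_ne hij.symm]
  · simp [flipAt_of_ne hij]

lemma four_smul_sum_pinnedStrings_vecMulVec_boolSign (hkl : k ≠ l) :
    (4 : R) • ∑ a ∈ pinnedStrings k l bk bl,
      Matrix.vecMulVec (fun i => (boolSign (a i) : R)) (fun i => boolSign (a i)) =
    (2 ^ Fintype.card ι : R) •
      (1 + (boolSign bk * boolSign bl : R) • (Matrix.single k l 1 + Matrix.single l k 1)) := by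
  have hcard : (4 : R) * #(pinnedStrings k l bk bl) = 2 ^ Fintype.card ι := by
    exact_mod_cast congrArg (Nat.cast (R := R)) (card_pinnedStrings hkl)
  ext i j
  simp only [Matrix.smul_apply, Matrix.sum_apply, Matrix.vecMulVec_apply, Matrix.add_apply,
    Matrix.one_apply, Matrix.single_apply, smul_eq_mul]
  by_cases hij : i = j
  · subst hij
    have hk : ¬(k = i ∧ l = i) := fun h => hkl (h.1.trans h.2.symm)
    have hl : ¬(l = i ∧ k = i) := fun h => hkl (h.2.trans h.1.symm)
    rw [sum_pinnedStrings_boolSign_mul_self, if_pos rfl, if_neg hk, if_neg hl]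
    linear_combination hcard
  by_cases hi : i = k ∧ j = l
  · obtain ⟨rfl, rfl⟩ := hi
    rw [sum_pinnedStrings_boolSign_mul_boolSign, if_neg hij, if_pos ⟨rfl, rfl⟩, if_neg (by tauto)]
    linear_combination (boolSign bk * boolSign bl) * hcard
  by_cases hi' : i = l ∧ j = k
  · obtain ⟨rfl, rfl⟩ := hi'
    rw [sum_congr rfl fun a _ => mul_comm (boolSign (a i) : R) (boolSign (a j)),
      sum_pinnedStrings_boolSign_mul_boolSign, if_neg hij, if_neg (by tauto), if_pos ⟨rfl, rfl⟩]
    linear_combination (boolSign bk * boolSign bl) * hcard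
  rw [sum_pinnedStrings_boolSign_mul_eq_zero hij (by tauto), if_neg hij, if_neg (by tauto),
    if_neg (by tauto)]
  ring

end SignSums

lemma of_muVec_mul_conj_muVec (d : ℕ) (a : Fin d → Bool) :
    Matrix.of (fun i j => muVec d a i * starRingEnd ℂ (muVec d a j)) =
      (d : ℂ)⁻¹ • Matrix.vecMulVec (fun i => (boolSign (a i) : ℂ)) (fun i => boolSign (a i)) := by
  have hsqrt : ((Real.sqrt d : ℝ) : ℂ) * (Real.sqrt d : ℝ) = d := by
    exact_mod_cast Real.mul_self_sqrt (Nat.cast_nonneg d)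
  ext i j
  simp only [Matrix.of_apply, Matrix.smul_apply, Matrix.vecMulVec_apply, smul_eq_mul, muVec,
    boolSign, Complex.conj_ofReal]
  rw [← hsqrt]
  split_ifs <;> push_cast <;> ring

theorem partial_mu_sum_general (d : ℕ) [NeZero d]
    (k r : Fin d) (hr : r ≠ 0) (bk bl : Bool) :
    ((d : ℂ) / 2 ^ d) •
      ∑ a ∈ Finset.univ.filter (fun a : Fin d → Bool => a k = bk ∧ a (k + r) = bl),
        Matrix.of (fun i j => muVec d a i * (starRingEnd ℂ) (muVec d a j)) =
    (1 / 4 : ℂ) • (1 : Matrix (Fin d) (Fin d) ℂ) +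
      ((1 / 4 : ℂ) * (if xor bk bl then -1 else 1)) •
        (Matrix.single k (k + r) 1 + Matrix.single (k + r) k 1) := by
  change ((d : ℂ) / 2 ^ d) • ∑ a ∈ pinnedStrings k (k + r) bk bl, _ = _
  have hkl : k ≠ k + r := by simpa [eq_comm] using hr
  have hscalar : (d : ℂ) / 2 ^ d * (d : ℂ)⁻¹ = 1 / 4 * (2 ^ d)⁻¹ * 4 := by
    field_simp [NeZero.ne (d : ℂ)]
  simp_rw [of_muVec_mul_conj_muVec, ← smul_sum, smul_smul]
  rw [hscalar, ← smul_smul _ (4 : ℂ), four_smul_sum_pinnedStrings_vecMulVec_boolSign hkl,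
    smul_smul, Fintype.card_fin, mul_assoc, inv_mul_cancel₀ (pow_ne_zero d two_ne_zero),
    mul_one, smul_add, smul_smul, ← boolSign_xor]
  rfl

/-- for `ℓ = k + r mod d` (`ℓ ≠ k`) and fixed bits `b_k, b_ℓ`,
`(d/2^d) Σ_{a : a_k = b_k, a_ℓ = b_ℓ} |μ_a⟩⟨μ_a|
  = (1/4)𝟙 + (1/4)(−1)^{b_k + b_ℓ}(|k⟩⟨ℓ| + |ℓ⟩⟨k|)`. -/
theorem partial_mu_sum (d : ℕ) [NeZero d] (hd : 3 ≤ d)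
    (k r : Fin d) (hr : r ≠ 0) (bk bl : Bool) :
    ((d : ℂ) / 2 ^ d) •
      ∑ a ∈ Finset.univ.filter (fun a : Fin d → Bool => a k = bk ∧ a (k + r) = bl),
        Matrix.of (fun i j => muVec d a i * (starRingEnd ℂ) (muVec d a j)) =
    (1 / 4 : ℂ) • (1 : Matrix (Fin d) (Fin d) ℂ) +
      ((1 / 4 : ℂ) * (if xor bk bl then -1 else 1)) •
        (Matrix.single k (k + r) 1 + Matrix.single (k + r) k 1) :=
  partial_mu_sum_general d k r hr bk bl
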